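/- Let F be a field, d = 2m, λ_f ∈ F, and Λ̄ = diag(λ_1, ..., λ_d) with all λ_j ≠ λ_f. Let V̄ ∈ F^{d×m} be a matrix such that Ṽ = [V̄ | Λ̄ V̄] ∈ F^{d×d} is invertible. Let u, u' ∈ F^d be vectors with all entries nonzero such that V̄^T diag(u'_j u_j) V̄ = 0. Set Λ̃_1 = diag(u)(−λ_f I + Λ̄)^{-1}, Λ̃_2 = diag(u')(−λ_f I + Λ̄)^{-1}, H_X = [I | λ_f I](Λ̃_2 Ṽ)^{-1}, and H_Z = [I | λ_f I](Λ̃_1 Ṽ)^{-1}. Then H_X H_Z^T = 0. -/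

import Mathlib

open Matrix

private lemma diag_inv' {F : Type*} [Field F] {n : Type*} [Fintype n] [DecidableEq n]
    (v : n → F) (h : ∀ j, v j ≠ 0) :
    (Matrix.diagonal v)⁻¹ = Matrix.diagonal (fun j => (v j)⁻¹) := by
  apply Matrix.inv_eq_right_inv
  rw [Matrix.diagonal_mul_diagonal]
  have : (fun j => v j * (v j)⁻¹) = fun _ => (1:F) := funext fun j => mul_inv_cancel₀ (h j)
  rw [this]
  exact Matrix.diagonal_one

private lemma diag_isUnit' {F : Type*} [Field F] {n : Type*} [Fintype n] [DecidableEq n]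
    (v : n → F) (h : ∀ j, v j ≠ 0) : IsUnit (Matrix.diagonal v) :=
  Matrix.isUnit_diagonal.mpr
    (IsUnit.of_mul_eq_one (a := v) (fun j => (v j)⁻¹) (funext fun j => mul_inv_cancel₀ (h j)))

private lemma fromRows_sub' {F : Type*} [Field F] {m₁ m₂ n : Type*}
    (A₁ : Matrix m₁ n F) (A₂ : Matrix m₂ n F) (B₁ : Matrix m₁ n F) (B₂ : Matrix m₂ n F) :
    Matrix.fromRows A₁ A₂ - Matrix.fromRows B₁ B₂ = Matrix.fromRows (A₁ - B₁) (A₂ - B₂) := by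
  ext (i | i) j <;> simp

private lemma smul_fromRows' {F : Type*} [Field F] {m₁ m₂ n : Type*} (c : F)
    (A₁ : Matrix m₁ n F) (A₂ : Matrix m₂ n F) :
    c • Matrix.fromRows A₁ A₂ = Matrix.fromRows (c • A₁) (c • A₂) := by
  ext (i | i) j <;> simp

private lemma toRows₁_one' {F : Type*} [Field F] {n : Type*} [Fintype n] [DecidableEq n] :
    Matrix.toRows₁ (1 : Matrix (n ⊕ n) (n ⊕ n) F) =
      Matrix.fromCols (1 : Matrix n n F) (0 : Matrix n n F) := by
  ext i (j | j) <;> simp [Matrix.toRows₁, Matrix.one_apply]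

/-- Dual-containment lemma: with `Ṽ = [V̄ | Λ̄ V̄]` invertible, `λ j ≠ λf`, all entries of
`u, u'` nonzero, `V̄ᵀ diag(u'_j u_j) V̄ = 0`, `Λ̃₁ = diag(u)(−λf I + Λ̄)⁻¹`,
`Λ̃₂ = diag(u')(−λf I + Λ̄)⁻¹`, `H_X = [I | λf I](Λ̃₂ Ṽ)⁻¹`, `H_Z = [I | λf I](Λ̃₁ Ṽ)⁻¹`,
we have `H_X H_Zᵀ = 0`. -/
theorem stmt3 {F : Type*} [Field F] {m : ℕ} (lf : F) (lam : Fin m ⊕ Fin m → F)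
    (hlam : ∀ j, lam j ≠ lf)
    (Vbar : Matrix (Fin m ⊕ Fin m) (Fin m) F)
    (u u' : Fin m ⊕ Fin m → F) (hu : ∀ j, u j ≠ 0) (hu' : ∀ j, u' j ≠ 0)
    (horth : Vbarᵀ * Matrix.diagonal (fun j => u' j * u j) * Vbar = 0)
    (Vt : Matrix (Fin m ⊕ Fin m) (Fin m ⊕ Fin m) F)
    (hVt : Vt = Matrix.fromCols Vbar (Matrix.diagonal lam * Vbar))
    (hVtinv : IsUnit Vt)
    (L1 L2 : Matrix (Fin m ⊕ Fin m) (Fin m ⊕ Fin m) F)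
    (hL1 : L1 = Matrix.diagonal u * (-(lf • (1 : Matrix (Fin m ⊕ Fin m) (Fin m ⊕ Fin m) F)) + Matrix.diagonal lam)⁻¹)
    (hL2 : L2 = Matrix.diagonal u' * (-(lf • (1 : Matrix (Fin m ⊕ Fin m) (Fin m ⊕ Fin m) F)) + Matrix.diagonal lam)⁻¹)
    (HX HZ : Matrix (Fin m) (Fin m ⊕ Fin m) F)
    (hHX : HX = Matrix.fromCols (1 : Matrix (Fin m) (Fin m) F) (lf • (1 : Matrix (Fin m) (Fin m) F)) * (L2 * Vt)⁻¹)
    (hHZ : HZ = Matrix.fromCols (1 : Matrix (Fin m) (Fin m) F) (lf • (1 : Matrix (Fin m) (Fin m) F)) * (L1 * Vt)⁻¹) :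
    HX * HZᵀ = 0 := by
  classical
  set d : Fin m ⊕ Fin m → F := fun j => lam j - lf with hd_def
  have hd : ∀ j, d j ≠ 0 := fun j => sub_ne_zero.mpr (hlam j)
  set w : Fin m ⊕ Fin m → F := fun j => u' j * u j with hw_def
  have hwne : ∀ j, w j ≠ 0 := fun j => mul_ne_zero (hu' j) (hu j)
  have hdetVt : IsUnit Vt.det := (Matrix.isUnit_iff_isUnit_det Vt).mp hVtinv
  have hVtVt : Vt * Vt⁻¹ = 1 := Matrix.mul_nonsing_inv Vt hdetVt
  have hVtVt' : Vt⁻¹ * Vt = 1 := Matrix.nonsing_inv_mul Vt hdetVt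
  have hDeq : (-(lf • (1 : Matrix (Fin m ⊕ Fin m) (Fin m ⊕ Fin m) F)) + Matrix.diagonal lam)
      = Matrix.diagonal d := by
    ext i j
    by_cases h : i = j <;>
      simp [Matrix.diagonal_apply, Matrix.one_apply, h, hd_def, sub_eq_neg_add]
  have hL1' : L1 = Matrix.diagonal (fun j => u j * (d j)⁻¹) := by
    rw [hL1, hDeq, diag_inv' d hd, Matrix.diagonal_mul_diagonal]
  have hL2' : L2 = Matrix.diagonal (fun j => u' j * (d j)⁻¹) := by
    rw [hL2, hDeq, diag_inv' d hd, Matrix.diagonal_mul_diagonal]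
  have hL1inv : L1⁻¹ = Matrix.diagonal (fun j => (u j * (d j)⁻¹)⁻¹) := by
    rw [hL1']; exact diag_inv' _ (fun j => mul_ne_zero (hu j) (inv_ne_zero (hd j)))
  have hL2inv : L2⁻¹ = Matrix.diagonal (fun j => (u' j * (d j)⁻¹)⁻¹) := by
    rw [hL2']; exact diag_inv' _ (fun j => mul_ne_zero (hu' j) (inv_ne_zero (hd j)))
  have hkey : L2⁻¹ * L1⁻¹ =
      Matrix.diagonal d * (Matrix.diagonal w)⁻¹ * Matrix.diagonal d := by
    rw [hL1inv, hL2inv, diag_inv' w hwne, Matrix.diagonal_mul_diagonal,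
      Matrix.diagonal_mul_diagonal, Matrix.diagonal_mul_diagonal]
    funext j
    field_simp [hw_def]
    rfl
  set A : Matrix (Fin m) (Fin m ⊕ Fin m) F :=
    Matrix.fromCols (1 : Matrix (Fin m) (Fin m) F) (lf • (1 : Matrix (Fin m) (Fin m) F)) * Vt⁻¹
    with hA_def
  have hHX' : HX = A * L2⁻¹ := by
    rw [hHX, Matrix.mul_inv_rev, hA_def, Matrix.mul_assoc]
  have hHZ' : HZ = A * L1⁻¹ := by
    rw [hHZ, Matrix.mul_inv_rev, hA_def, Matrix.mul_assoc]
  set M : Matrix (Fin m ⊕ Fin m) (Fin m ⊕ Fin m) F := Vtᵀ * Matrix.diagonal w * Vt with hM_def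
  have hMunit : IsUnit M := by
    refine (IsUnit.mul (IsUnit.mul ?_ (diag_isUnit' w hwne)) hVtinv)
    rw [Matrix.isUnit_iff_isUnit_det, Matrix.det_transpose]
    exact hdetVt
  have hMdet : IsUnit M.det := (Matrix.isUnit_iff_isUnit_det M).mp hMunit
  have hMM : M * M⁻¹ = 1 := Matrix.mul_nonsing_inv M hMdet
  have hdiagwinv : (Matrix.diagonal w)⁻¹ = Vt * M⁻¹ * Vtᵀ := by
    have hVtT : Vtᵀ⁻¹ * Vtᵀ = 1 := by
      rw [← Matrix.transpose_nonsing_inv, ← Matrix.transpose_mul, hVtVt, Matrix.transpose_one]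
    rw [hM_def, Matrix.mul_inv_rev, Matrix.mul_inv_rev]
    symm
    calc Vt * (Vt⁻¹ * ((Matrix.diagonal w)⁻¹ * Vtᵀ⁻¹)) * Vtᵀ
        = (Vt * Vt⁻¹) * (Matrix.diagonal w)⁻¹ * (Vtᵀ⁻¹ * Vtᵀ) := by
          simp only [Matrix.mul_assoc]
      _ = (Matrix.diagonal w)⁻¹ := by rw [hVtVt, hVtT, Matrix.one_mul, Matrix.mul_one]
  set BV : Matrix (Fin m) (Fin m ⊕ Fin m) F := A * Matrix.diagonal d * Vt with hBV_def
  have hmain : HX * HZᵀ = BV * M⁻¹ * BVᵀ := by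
    rw [hHX', hHZ', Matrix.transpose_mul, hBV_def]
    have hL1T : L1⁻¹ᵀ = L1⁻¹ := by rw [hL1inv, Matrix.diagonal_transpose]
    rw [hL1T]
    calc A * L2⁻¹ * (L1⁻¹ * Aᵀ) = A * (L2⁻¹ * L1⁻¹) * Aᵀ := by
          simp only [Matrix.mul_assoc]
      _ = A * (Matrix.diagonal d * (Vt * M⁻¹ * Vtᵀ) * Matrix.diagonal d) * Aᵀ := by
          rw [hkey, hdiagwinv]
      _ = (A * Matrix.diagonal d * Vt) * M⁻¹ * (Vtᵀ * Matrix.diagonal d * Aᵀ) := by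
          simp only [Matrix.mul_assoc]
      _ = (A * Matrix.diagonal d * Vt) * M⁻¹ * (A * Matrix.diagonal d * Vt)ᵀ := by
          conv_rhs => rw [Matrix.transpose_mul, Matrix.transpose_mul,
            Matrix.diagonal_transpose]
          simp only [Matrix.mul_assoc]
  have hV1 : Vt⁻¹ * Vbar = Matrix.fromRows 1 0 := by
    have h : Vt * Matrix.fromRows (1 : Matrix (Fin m) (Fin m) F) (0 : Matrix (Fin m) (Fin m) F) = Vbar := by
      rw [hVt, Matrix.fromCols_mul_fromRows]
      simp
    rw [← h, ← Matrix.mul_assoc, hVtVt', Matrix.one_mul]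
  have hV2 : Vt⁻¹ * (Matrix.diagonal lam * Vbar) = Matrix.fromRows 0 1 := by
    have h : Vt * Matrix.fromRows (0 : Matrix (Fin m) (Fin m) F) (1 : Matrix (Fin m) (Fin m) F)
        = Matrix.diagonal lam * Vbar := by
      rw [hVt, Matrix.fromCols_mul_fromRows]
      simp
    rw [← h, ← Matrix.mul_assoc, hVtVt', Matrix.one_mul]
  have hdVbar : Matrix.diagonal d * Vbar = Matrix.diagonal lam * Vbar - lf • Vbar := by
    have h : Matrix.diagonal d = Matrix.diagonal lam
        - lf • (1 : Matrix (Fin m ⊕ Fin m) (Fin m ⊕ Fin m) F) := by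
      rw [← hDeq]; abel
    rw [h, Matrix.sub_mul, Matrix.smul_mul, Matrix.one_mul]
  set R : Matrix (Fin m) (Fin m) F :=
    Matrix.fromCols (1 : Matrix (Fin m) (Fin m) F) (lf • (1 : Matrix (Fin m) (Fin m) F)) *
      (Vt⁻¹ * (Matrix.diagonal d * (Matrix.diagonal lam * Vbar))) with hR_def
  have hBVcols : BV = Matrix.fromCols 0 R := by
    have h1 : Matrix.diagonal d * Vt =
        Matrix.fromCols (Matrix.diagonal d * Vbar)
          (Matrix.diagonal d * (Matrix.diagonal lam * Vbar)) := by
      rw [hVt, Matrix.mul_fromCols]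
    have h2 : Vt⁻¹ * (Matrix.diagonal d * Vt) =
        Matrix.fromCols (Matrix.fromRows (-(lf • (1 : Matrix (Fin m) (Fin m) F))) 1)
          (Vt⁻¹ * (Matrix.diagonal d * (Matrix.diagonal lam * Vbar))) := by
      rw [h1, Matrix.mul_fromCols, hdVbar, Matrix.mul_sub, Matrix.mul_smul, hV1, hV2,
        Matrix.fromCols_ext_iff]
      refine ⟨?_, rfl⟩
      rw [smul_fromRows', fromRows_sub']
      simp
    rw [hBV_def, hA_def]
    simp only [Matrix.mul_assoc]
    rw [h2, Matrix.mul_fromCols, Matrix.fromCols_mul_fromRows,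
      Matrix.fromCols_ext_iff]
    constructor
    · simp
    · rw [hR_def]
  set S : Matrix (Fin m) (Fin m) F :=
    Vbarᵀ * Matrix.diagonal w * (Matrix.diagonal lam * Vbar) with hS_def
  set P : Matrix (Fin m) (Fin m ⊕ Fin m) F := Vbarᵀ * Matrix.diagonal w * Vt with hP_def
  have hP : P = Matrix.fromCols 0 S := by
    rw [hP_def, hVt, Matrix.mul_fromCols, Matrix.fromCols_ext_iff]
    exact ⟨horth, hS_def.symm⟩
  set Q : Matrix (Fin m) (Fin m ⊕ Fin m) F :=
    Vbarᵀ * Matrix.diagonal lam * Matrix.diagonal w * Vt with hQ_def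
  have hMrows : M = Matrix.fromRows P Q := by
    have hT : Vtᵀ = Matrix.fromRows Vbarᵀ (Vbarᵀ * Matrix.diagonal lam) := by
      rw [hVt, Matrix.transpose_fromCols, Matrix.transpose_mul, Matrix.diagonal_transpose]
    rw [hM_def, hT, Matrix.fromRows_mul, Matrix.fromRows_mul, hP_def, hQ_def]
  obtain ⟨K, hSK⟩ : ∃ K, S * K = 1 := by
    have this1 : Matrix.fromRows P Q * M⁻¹ = 1 := by rw [← hMrows]; exact hMM
    rw [Matrix.fromRows_mul] at this1
    have h2 := congrArg Matrix.toRows₁ this1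
    simp only [Matrix.toRows₁_fromRows] at h2
    rw [toRows₁_one'] at h2
    refine ⟨Matrix.toRows₂ (M⁻¹ *
      Matrix.fromRows (1 : Matrix (Fin m) (Fin m) F) (0 : Matrix (Fin m) (Fin m) F)), ?_⟩
    have h3 : P * (M⁻¹ *
        Matrix.fromRows (1 : Matrix (Fin m) (Fin m) F) (0 : Matrix (Fin m) (Fin m) F)) = 1 := by
      rw [← Matrix.mul_assoc, h2, Matrix.fromCols_mul_fromRows]
      simp
    set N : Matrix (Fin m ⊕ Fin m) (Fin m) F := M⁻¹ *
      Matrix.fromRows (1 : Matrix (Fin m) (Fin m) F) (0 : Matrix (Fin m) (Fin m) F) with hN_def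
    have hNsplit : N = Matrix.fromRows (Matrix.toRows₁ N) (Matrix.toRows₂ N) :=
      (Matrix.fromRows_toRows N).symm
    rw [hP, hNsplit, Matrix.fromCols_mul_fromRows] at h3
    simpa using h3
  have hKS : K * S = 1 := mul_eq_one_comm.mp hSK
  set Y : Matrix (Fin m ⊕ Fin m) (Fin m) F := M⁻¹ * Matrix.fromRows (0 : Matrix (Fin m) (Fin m) F) Rᵀ with hY_def
  have hYsplit : Y = Matrix.fromRows (Matrix.toRows₁ Y) (Matrix.toRows₂ Y) :=
    (Matrix.fromRows_toRows Y).symm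
  have hMY : M * Y = Matrix.fromRows 0 Rᵀ := by
    rw [hY_def, ← Matrix.mul_assoc, hMM, Matrix.one_mul]
  have hSY2 : S * Matrix.toRows₂ Y = 0 := by
    have this2 : Matrix.fromRows P Q * Y = Matrix.fromRows 0 Rᵀ := by
      rw [← hMrows]; exact hMY
    rw [Matrix.fromRows_mul] at this2
    have h4 := congrArg Matrix.toRows₁ this2
    simp only [Matrix.toRows₁_fromRows] at h4
    rw [hP] at h4
    rw [hYsplit, Matrix.fromCols_mul_fromRows] at h4
    simpa using h4
  have hY2 : Matrix.toRows₂ Y = 0 := by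
    calc Matrix.toRows₂ Y = (K * S) * Matrix.toRows₂ Y := by rw [hKS, Matrix.one_mul]
      _ = K * (S * Matrix.toRows₂ Y) := by rw [Matrix.mul_assoc]
      _ = 0 := by rw [hSY2, Matrix.mul_zero]
  rw [hmain, hBVcols, Matrix.transpose_fromCols, Matrix.transpose_zero, Matrix.mul_assoc,
    ← hY_def, hYsplit, Matrix.fromCols_mul_fromRows, hY2]
  simp
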